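/- Fix M ≥ 2 and p > 0. Consider the label vectors (in R^{2M-1}): prototype 0 has label with value 3/(2M+1) on class a = 0 and value 2/(2M+1) on each of the M−1 'midpoint' classes; each outer prototype i has label with value 3/5 on its own class b_i and 2/5 on the midpoint class c_i. On the segment joining prototype 0 to outer prototype i at distance p, parametrized by distance d ∈ (0, p) from prototype 0, the classifier argmax of [y0/d + y_i/(p−d)] predicts class a for d < 5p/(4M+7), class c_i for 5p/(4M+7) < d < 10p/(2M+11), and class b_i for d > 10p/(2M+11). -/

import Mathlib

/-- Central prototype label over classes `0, 1, ..., 2M-2`: class `0` is `a`,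
classes `1, ..., M-1` are the outer classes `b_i`, classes `M, ..., 2M-2`
are the midpoint classes `c_i` (class `c_i` has index `M-1+i`). -/
noncomputable def centralLabel (M : ℕ) (j : ℕ) : ℝ :=
  if j = 0 then 3 / (2 * M + 1)
  else if M ≤ j ∧ j ≤ 2 * M - 2 then 2 / (2 * M + 1) else 0

/-- Label of outer prototype `i`: value `3/5` on its own class `b_i` (index `i`)
and `2/5` on its midpoint class `c_i` (index `M-1+i`). -/
noncomputable def outerLabel (M i : ℕ) (j : ℕ) : ℝ :=
  if j = i then 3 / 5 else if j = M - 1 + i then 2 / 5 else 0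

/-- Weighted label on the segment from the central prototype to outer prototype `i`,
at distance `d` from the center, where the two prototypes are `p` apart. -/
noncomputable def segLabel (M i : ℕ) (p d : ℝ) (j : ℕ) : ℝ :=
  centralLabel M j / d + outerLabel M i j / (p - d)

/-!
With `u = 1 / ((2M+1) d)` and `v = 1 / (5 (p - d))`, the weighted label scores `3u` on `a`,
`3v` on `b_i`, `2u + 2v` on `c_i`, and at most `2u` on every other class. Hence `a` wins iff
`2v < u`, `b_i` wins iff `2u < v`, and `c_i` wins in between; clearing denominators turns
`u = 2v` into `d = 5p/(4M+7)` and `v = 2u` into `d = 10p/(2M+11)`.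
-/

lemma argmax_of_three_scores {s : ℕ → ℝ} {a b c : ℕ} {u v : ℝ} (hv : 0 < v)
    (ha : s a = 3 * u) (hb : s b = 3 * v) (hc : s c = 2 * u + 2 * v)
    (hrest : ∀ j, j ≠ a → j ≠ b → j ≠ c → s j ≤ 2 * u) :
    (2 * v < u → ∀ j ≠ a, s j < s a) ∧
    (u < 2 * v → v < 2 * u → ∀ j ≠ c, s j < s c) ∧
    (2 * u < v → ∀ j ≠ b, s j < s b) := by
  refine ⟨fun huv j hja => ?_, fun huv hvu j hjc => ?_, fun huv j hjb => ?_⟩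
  · by_cases hjb : j = b
    · subst hjb; linarith
    by_cases hjc : j = c
    · subst hjc; linarith
    linarith [hrest j hja hjb hjc]
  · by_cases hja : j = a
    · subst hja; linarith
    by_cases hjb : j = b
    · subst hjb; linarith
    linarith [hrest j hja hjb hjc]
  · by_cases hja : j = a
    · subst hja; linarith
    by_cases hjc : j = c
    · subst hjc; linarith
    linarith [hrest j hja hjb hjc]

lemma two_mul_inv_lt_inv_iff {x y : ℝ} (hx : 0 < x) (hy : 0 < y) :
    2 * y⁻¹ < x⁻¹ ↔ 2 * x < y := by
  rw [← div_eq_mul_inv, ← one_div, div_lt_div_iff₀ hy hx, one_mul]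

lemma inv_lt_two_mul_inv_iff {x y : ℝ} (hx : 0 < x) (hy : 0 < y) :
    x⁻¹ < 2 * y⁻¹ ↔ y < 2 * x := by
  rw [← div_eq_mul_inv, ← one_div, div_lt_div_iff₀ hx hy, one_mul]

section segLabel

variable {M i : ℕ} {p d : ℝ}

lemma segLabel_zero (hi : 0 < i) :
    segLabel M i p d 0 = 3 * ((2 * M + 1) * d)⁻¹ := by
  have h0c : 0 ≠ M - 1 + i := by omega
  simp only [segLabel, centralLabel, outerLabel, ↓reduceIte, if_neg hi.ne, if_neg h0c]
  rw [zero_div, add_zero, div_div, div_eq_mul_inv]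

lemma segLabel_self (hi : 0 < i) (hiM : i < M) :
    segLabel M i p d i = 3 * (5 * (p - d))⁻¹ := by
  have hmid : ¬(M ≤ i ∧ i ≤ 2 * M - 2) := by omega
  simp only [segLabel, centralLabel, outerLabel, if_neg hi.ne', if_neg hmid, ↓reduceIte]
  rw [zero_div, zero_add, div_div, div_eq_mul_inv]

lemma segLabel_mid (hM : 2 ≤ M) (hi : 0 < i) (hiM : i < M) :
    segLabel M i p d (M - 1 + i) = 2 * ((2 * M + 1) * d)⁻¹ + 2 * (5 * (p - d))⁻¹ := by
  have hc0 : M - 1 + i ≠ 0 := by omega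
  have hci : M - 1 + i ≠ i := by omega
  have hmid : M ≤ M - 1 + i ∧ M - 1 + i ≤ 2 * M - 2 := by omega
  simp only [segLabel, centralLabel, outerLabel, if_neg hc0, if_pos hmid, if_neg hci, if_true]
  rw [div_div, div_div, div_eq_mul_inv, div_eq_mul_inv]

lemma segLabel_le_of_ne (hd : 0 ≤ d) {j : ℕ} (hj0 : j ≠ 0) (hji : j ≠ i)
    (hjc : j ≠ M - 1 + i) :
    segLabel M i p d j ≤ 2 * ((2 * M + 1) * d)⁻¹ := by
  have hcentral : centralLabel M j ≤ 2 / (2 * M + 1) := by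
    rw [centralLabel, if_neg hj0]
    split_ifs
    · exact le_rfl
    · positivity
  simp only [segLabel, outerLabel, if_neg hji, if_neg hjc, zero_div, add_zero]
  rw [← div_eq_mul_inv, ← div_div]
  exact div_le_div_of_nonneg_right hcentral hd

end segLabel

theorem stmt_8_general (M : ℕ) (hM : 2 ≤ M) (p : ℝ)
    (i : ℕ) (hi1 : 1 ≤ i) (hi2 : i ≤ M - 1) (d : ℝ) (hd0 : 0 < d) (hdp : d < p) :
    (d < 5 * p / (4 * M + 7) →
      ∀ j ≤ 2 * M - 2, j ≠ 0 → segLabel M i p d j < segLabel M i p d 0) ∧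
    (5 * p / (4 * M + 7) < d → d < 10 * p / (2 * M + 11) →
      ∀ j ≤ 2 * M - 2, j ≠ M - 1 + i → segLabel M i p d j < segLabel M i p d (M - 1 + i)) ∧
    (10 * p / (2 * M + 11) < d →
      ∀ j ≤ 2 * M - 2, j ≠ i → segLabel M i p d j < segLabel M i p d i) := by
  have hi : 0 < i := hi1
  have hiM : i < M := by omega
  have hx : 0 < (2 * M + 1) * d := by positivity
  have hy : 0 < 5 * (p - d) := by linarith
  obtain ⟨hA, hC, hB⟩ := argmax_of_three_scores (inv_pos.2 hy) (segLabel_zero hi)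
    (segLabel_self hi hiM) (segLabel_mid hM hi hiM) (fun j => segLabel_le_of_ne hd0.le)
  have h47 : (0 : ℝ) < 4 * M + 7 := by positivity
  have h211 : (0 : ℝ) < 2 * M + 11 := by positivity
  refine ⟨fun h j _ => hA ?_ j, fun h h' j _ => hC ?_ ?_ j, fun h j _ => hB ?_ j⟩
  · rw [two_mul_inv_lt_inv_iff hx hy]
    linarith [(lt_div_iff₀ h47).1 h]
  · rw [inv_lt_two_mul_inv_iff hx hy]
    linarith [(div_lt_iff₀ h47).1 h]
  · rw [inv_lt_two_mul_inv_iff hy hx]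
    linarith [(lt_div_iff₀ h211).1 h']
  · rw [two_mul_inv_lt_inv_iff hy hx]
    linarith [(div_lt_iff₀ h211).1 h]

theorem stmt_8 (M : ℕ) (hM : 2 ≤ M) (p : ℝ) (hp : 0 < p)
    (i : ℕ) (hi1 : 1 ≤ i) (hi2 : i ≤ M - 1) (d : ℝ) (hd0 : 0 < d) (hdp : d < p) :
    (d < 5 * p / (4 * M + 7) →
      ∀ j ≤ 2 * M - 2, j ≠ 0 → segLabel M i p d j < segLabel M i p d 0) ∧
    (5 * p / (4 * M + 7) < d → d < 10 * p / (2 * M + 11) →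
      ∀ j ≤ 2 * M - 2, j ≠ M - 1 + i → segLabel M i p d j < segLabel M i p d (M - 1 + i)) ∧
    (10 * p / (2 * M + 11) < d →
      ∀ j ≤ 2 * M - 2, j ≠ i → segLabel M i p d j < segLabel M i p d i) :=
  stmt_8_general M hM p i hi1 hi2 d hd0 hdp
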